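/- arXiv:2212.12815 — 2 statements merged into one kernel-verified Lean document; each statement's English description precedes it below -/
import Mathlib

section
/- Let H be an n-vertex C5-free 3-graph with δ2^+(H) ≥ n/2 containing a K4 on vi, vj, vk, vl, with sets A_m, B_m defined as usual. If a ∈ B_i, then: (1) N(a, vj) is disjoint from A_k ∪ B_k (and from A_l ∪ B_l), and (2) |A_i| + |A_j| + |B_i| + |B_j| ≥ n/2 + 1. -/
open Finset

/-- The link (co-neighborhood) of the pair `{u,v}`: all `w` with `{u,v,w}` an edge. -/
def link {n : ℕ} (E : Finset (Finset (Fin n))) (u v : Fin n) : Finset (Fin n) :=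
  Finset.univ.filter (fun w => ({u, v, w} : Finset (Fin n)) ∈ E)

/-- `E` is the edge set of a 3-graph: every edge has exactly 3 vertices. -/
def isEdgeSet {n : ℕ} (E : Finset (Finset (Fin n))) : Prop := ∀ e ∈ E, e.card = 3

/-- `E` contains a copy of `C5⁻ = {abc, bcd, cde, dea}`. -/
def hasC5minus {n : ℕ} (E : Finset (Finset (Fin n))) : Prop :=
  ∃ a b c d e : Fin n,
    a ≠ b ∧ a ≠ c ∧ a ≠ d ∧ a ≠ e ∧ b ≠ c ∧ b ≠ d ∧ b ≠ e ∧ c ≠ d ∧ c ≠ e ∧ d ≠ e ∧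
    ({a, b, c} : Finset (Fin n)) ∈ E ∧ ({b, c, d} : Finset (Fin n)) ∈ E ∧
    ({c, d, e} : Finset (Fin n)) ∈ E ∧ ({d, e, a} : Finset (Fin n)) ∈ E

/-- `E` contains a copy of `C5 = {abc, bcd, cde, dea, eab}`. -/
def hasC5 {n : ℕ} (E : Finset (Finset (Fin n))) : Prop :=
  ∃ a b c d e : Fin n,
    a ≠ b ∧ a ≠ c ∧ a ≠ d ∧ a ≠ e ∧ b ≠ c ∧ b ≠ d ∧ b ≠ e ∧ c ≠ d ∧ c ≠ e ∧ d ≠ e ∧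
    ({a, b, c} : Finset (Fin n)) ∈ E ∧ ({b, c, d} : Finset (Fin n)) ∈ E ∧
    ({c, d, e} : Finset (Fin n)) ∈ E ∧ ({d, e, a} : Finset (Fin n)) ∈ E ∧
    ({e, a, b} : Finset (Fin n)) ∈ E

/-- `a, b, c, d` form a `K4` in `E`: all four triples among them are edges. -/
def isK4 {n : ℕ} (E : Finset (Finset (Fin n))) (a b c d : Fin n) : Prop :=
  a ≠ b ∧ a ≠ c ∧ a ≠ d ∧ b ≠ c ∧ b ≠ d ∧ c ≠ d ∧
  ({a, b, c} : Finset (Fin n)) ∈ E ∧ ({a, b, d} : Finset (Fin n)) ∈ E ∧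
  ({a, c, d} : Finset (Fin n)) ∈ E ∧ ({b, c, d} : Finset (Fin n)) ∈ E

/-- `E` contains a copy of `K4⁻ = {abc, abd, acd}`. -/
def hasK4minus {n : ℕ} (E : Finset (Finset (Fin n))) : Prop :=
  ∃ a b c d : Fin n, a ≠ b ∧ a ≠ c ∧ a ≠ d ∧ b ≠ c ∧ b ≠ d ∧ c ≠ d ∧
    ({a, b, c} : Finset (Fin n)) ∈ E ∧ ({a, b, d} : Finset (Fin n)) ∈ E ∧
    ({a, c, d} : Finset (Fin n)) ∈ E

/-- `A`-set of a `K4`: intersection of the three pairwise links of `{x, y, z}`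
(the set `A_w` for the fourth vertex `w` of the `K4`). -/
def Aset {n : ℕ} (E : Finset (Finset (Fin n))) (x y z : Fin n) : Finset (Fin n) :=
  link E x y ∩ link E y z ∩ link E z x

/-- `B`-set of a `K4`: `B_w = N(w,x) ∩ N(w,y) ∩ N(w,z)`. -/
def Bset {n : ℕ} (E : Finset (Finset (Fin n))) (w x y z : Fin n) : Finset (Fin n) :=
  link E w x ∩ link E w y ∩ link E w z


section stmt11aux
variable {n : ℕ} {E : Finset (Finset (Fin n))}

lemma st11_card_pair_le (x y : Fin n) : ({x,y} : Finset (Fin n)).card ≤ 2 :=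
  (card_insert_le _ _).trans (by simp)

lemma st11_edge_distinct (hE : isEdgeSet E) {x y z : Fin n}
    (h : ({x,y,z} : Finset (Fin n)) ∈ E) : x ≠ y ∧ x ≠ z ∧ y ≠ z := by
  have h3 := hE _ h
  refine ⟨?_, ?_, ?_⟩ <;> rintro rfl
  · have e : ({x,x,z} : Finset (Fin n)) = {x,z} := by ext t; simp; try tauto
    rw [e] at h3; have := st11_card_pair_le x z; omega
  · have e : ({x,y,x} : Finset (Fin n)) = {x,y} := by ext t; simp; try tauto
    rw [e] at h3; have := st11_card_pair_le x y; omega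
  · have e : ({x,y,y} : Finset (Fin n)) = {x,y} := by ext t; simp; try tauto
    rw [e] at h3; have := st11_card_pair_le x y; omega

lemma st11_mem_link {u v w : Fin n} : w ∈ link E u v ↔ ({u,v,w} : Finset (Fin n)) ∈ E := by
  simp [link]

lemma st11_perm213 {x y z : Fin n} (h : ({x,y,z} : Finset (Fin n)) ∈ E) :
    ({y,x,z} : Finset (Fin n)) ∈ E := by
  have e : ({y,x,z} : Finset (Fin n)) = {x,y,z} := by ext t; simp; tauto
  rw [e]; exact h

lemma st11_perm132 {x y z : Fin n} (h : ({x,y,z} : Finset (Fin n)) ∈ E) :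
    ({x,z,y} : Finset (Fin n)) ∈ E := by
  have e : ({x,z,y} : Finset (Fin n)) = {x,y,z} := by ext t; simp; tauto
  rw [e]; exact h

lemma st11_perm231 {x y z : Fin n} (h : ({x,y,z} : Finset (Fin n)) ∈ E) :
    ({y,z,x} : Finset (Fin n)) ∈ E := by
  have e : ({y,z,x} : Finset (Fin n)) = {x,y,z} := by ext t; simp; tauto
  rw [e]; exact h

lemma st11_perm312 {x y z : Fin n} (h : ({x,y,z} : Finset (Fin n)) ∈ E) :
    ({z,x,y} : Finset (Fin n)) ∈ E := by
  have e : ({z,x,y} : Finset (Fin n)) = {x,y,z} := by ext t; simp; tauto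
  rw [e]; exact h

lemma st11_perm321 {x y z : Fin n} (h : ({x,y,z} : Finset (Fin n)) ∈ E) :
    ({z,y,x} : Finset (Fin n)) ∈ E := by
  have e : ({z,y,x} : Finset (Fin n)) = {x,y,z} := by ext t; simp; tauto
  rw [e]; exact h

lemma st11_link_comm (u v : Fin n) : link E u v = link E v u := by
  ext w; simp only [st11_mem_link]
  exact ⟨st11_perm213, st11_perm213⟩

lemma st11_self_notMem_link (hE : isEdgeSet E) (u v : Fin n) : u ∉ link E u v := by
  intro h
  exact (st11_edge_distinct hE (st11_mem_link.mp h)).2.1 rfl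

lemma st11_buildC5 (hE : isEdgeSet E) (hfree : ¬ hasC5 E) (a b c d e : Fin n)
    (h1 : ({a,b,c} : Finset (Fin n)) ∈ E) (h2 : ({b,c,d} : Finset (Fin n)) ∈ E)
    (h3 : ({c,d,e} : Finset (Fin n)) ∈ E) (h4 : ({d,e,a} : Finset (Fin n)) ∈ E)
    (h5 : ({e,a,b} : Finset (Fin n)) ∈ E) : False := by
  obtain ⟨hab, hac, hbc⟩ := st11_edge_distinct hE h1
  obtain ⟨_, hbd, hcd⟩ := st11_edge_distinct hE h2
  obtain ⟨_, hce, hde⟩ := st11_edge_distinct hE h3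
  obtain ⟨_, hda, hea⟩ := st11_edge_distinct hE h4
  obtain ⟨_, heb, _⟩ := st11_edge_distinct hE h5
  exact hfree ⟨a, b, c, d, e, hab, hac, Ne.symm hda, Ne.symm hea, hbc, hbd, Ne.symm heb,
    hcd, hce, hde, h1, h2, h3, h4, h5⟩

lemma st11_part1_core (hE : isEdgeSet E) (hfree : ¬ hasC5 E) (vi vj vz a x : Fin n)
    (haij : ({vi,vj,a} : Finset (Fin n)) ∈ E) (haiz : ({vi,vz,a} : Finset (Fin n)) ∈ E)
    (hax : ({a,vj,x} : Finset (Fin n)) ∈ E) (hxjz : ({vj,vz,x} : Finset (Fin n)) ∈ E)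
    (hxzi : ({vz,vi,x} : Finset (Fin n)) ∈ E) : False :=
  st11_buildC5 hE hfree a vj x vz vi hax (st11_perm132 hxjz) (st11_perm312 hxzi)
    (st11_perm213 haiz) (st11_perm132 haij)

lemma st11_toNat_decide (P : Prop) [Decidable P] : (decide P).toNat = if P then 1 else 0 := by
  by_cases h : P <;> simp [h]

lemma st11_sum_ind (L : Finset (Fin n)) :
    (∑ v : Fin n, (if v ∈ L then (1:ℕ) else 0)) = L.card := by
  rw [Finset.sum_boole]; simp [Finset.filter_mem_eq_inter]

end stmt11aux

set_option maxHeartbeats 2000000 in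
set_option synthInstance.maxSize 2000 in
set_option synthInstance.maxHeartbeats 800000 in
lemma st11_graph_le3 : ∀ p12 p13 p14 p23 p24 p34 : Bool,
    (¬(p13 ∧ p12 ∧ p24) ∧ ¬(p14 ∧ p12 ∧ p23) ∧ ¬(p12 ∧ p13 ∧ p34) ∧ ¬(p14 ∧ p13 ∧ p23) ∧
    ¬(p12 ∧ p14 ∧ p34) ∧ ¬(p13 ∧ p14 ∧ p24) ∧ ¬(p12 ∧ p23 ∧ p34) ∧ ¬(p24 ∧ p23 ∧ p13) ∧
    ¬(p12 ∧ p24 ∧ p34) ∧ ¬(p23 ∧ p24 ∧ p14) ∧ ¬(p13 ∧ p34 ∧ p24) ∧ ¬(p23 ∧ p34 ∧ p14)) →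
    p12.toNat + p13.toNat + p14.toNat + p23.toNat + p24.toNat + p34.toNat ≤ 3 := by
  decide

set_option maxHeartbeats 2000000 in
set_option synthInstance.maxSize 2000 in
set_option synthInstance.maxHeartbeats 800000 in
lemma st11_graph_classify : ∀ p12 p13 p14 p23 p24 p34 : Bool,
    (¬(p13 ∧ p12 ∧ p24) ∧ ¬(p14 ∧ p12 ∧ p23) ∧ ¬(p12 ∧ p13 ∧ p34) ∧ ¬(p14 ∧ p13 ∧ p23) ∧
    ¬(p12 ∧ p14 ∧ p34) ∧ ¬(p13 ∧ p14 ∧ p24) ∧ ¬(p12 ∧ p23 ∧ p34) ∧ ¬(p24 ∧ p23 ∧ p13) ∧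
    ¬(p12 ∧ p24 ∧ p34) ∧ ¬(p23 ∧ p24 ∧ p14) ∧ ¬(p13 ∧ p34 ∧ p24) ∧ ¬(p23 ∧ p34 ∧ p14)) →
    (3 ≤ p12.toNat + p13.toNat + p14.toNat + p23.toNat + p24.toNat + p34.toNat) →
    (¬(p12 ∧ p24 ∧ p14) ∧ ¬(p13 ∧ p23 ∧ p34) ∧ ¬(p12 ∧ p23 ∧ p13) ∧ ¬(p14 ∧ p24 ∧ p34)) →
    ((p23 ∧ p34 ∧ p24) ∨ (p13 ∧ p34 ∧ p14) ∨ (p12 ∧ p13 ∧ p14) ∨ (p12 ∧ p23 ∧ p24)) := by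
  decide

/-- Fact 5: if `a ∈ B_i`, then `N(a,vj)` is disjoint from `A_k ∪ B_k`
and from `A_l ∪ B_l`, and `|A_i| + |A_j| + |B_i| + |B_j| ≥ n/2 + 1`. -/
theorem stmt_11 (n : ℕ) (E : Finset (Finset (Fin n))) (hE : isEdgeSet E)
    (hC5free : ¬ hasC5 E)
    (hdeg : ∀ u v : Fin n, (link E u v).Nonempty → n ≤ 2 * (link E u v).card)
    (vi vj vk vl : Fin n) (hK4 : isK4 E vi vj vk vl)
    (a : Fin n) (ha : a ∈ Bset E vi vj vk vl) :
    Disjoint (link E a vj) (Aset E vi vj vl ∪ Bset E vk vi vj vl) ∧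
    Disjoint (link E a vj) (Aset E vi vj vk ∪ Bset E vl vi vj vk) ∧
    n + 2 ≤ 2 * ((Aset E vj vk vl).card + (Aset E vi vk vl).card +
      (Bset E vi vj vk vl).card + (Bset E vj vi vk vl).card) := by
  obtain ⟨hij, hik, hil, hjk, hjl, hkl, eijk, eijl, eikl, ejkl⟩ := hK4
  have ha' := ha
  simp only [Bset, Finset.mem_inter] at ha'
  obtain ⟨⟨haij, haik⟩, hail⟩ := ha'
  have Eaij : ({vi,vj,a} : Finset (Fin n)) ∈ E := st11_mem_link.mp haij
  have Eaik : ({vi,vk,a} : Finset (Fin n)) ∈ E := st11_mem_link.mp haik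
  have Eail : ({vi,vl,a} : Finset (Fin n)) ∈ E := st11_mem_link.mp hail
  have hdAk : ∀ x ∈ link E a vj, x ∉ Aset E vi vj vl := by
    intro x hx hmem
    simp only [Aset, Finset.mem_inter] at hmem
    obtain ⟨⟨h1, h2⟩, h3⟩ := hmem
    exact st11_part1_core hE hC5free vi vj vl a x Eaij Eail (st11_mem_link.mp hx)
      (st11_mem_link.mp h2) (st11_mem_link.mp h3)
  have hdBk : ∀ x ∈ link E a vj, x ∉ Bset E vk vi vj vl := by
    intro x hx hmem
    simp only [Bset, Finset.mem_inter] at hmem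
    obtain ⟨⟨h1, h2⟩, h3⟩ := hmem
    exact st11_part1_core hE hC5free vi vj vk a x Eaij Eaik (st11_mem_link.mp hx)
      (st11_perm213 (st11_mem_link.mp h2)) (st11_mem_link.mp h1)
  have hdAl : ∀ x ∈ link E a vj, x ∉ Aset E vi vj vk := by
    intro x hx hmem
    simp only [Aset, Finset.mem_inter] at hmem
    obtain ⟨⟨h1, h2⟩, h3⟩ := hmem
    exact st11_part1_core hE hC5free vi vj vk a x Eaij Eaik (st11_mem_link.mp hx)
      (st11_mem_link.mp h2) (st11_mem_link.mp h3)
  have hdBl : ∀ x ∈ link E a vj, x ∉ Bset E vl vi vj vk := by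
    intro x hx hmem
    simp only [Bset, Finset.mem_inter] at hmem
    obtain ⟨⟨h1, h2⟩, h3⟩ := hmem
    exact st11_part1_core hE hC5free vi vj vl a x Eaij Eail (st11_mem_link.mp hx)
      (st11_perm213 (st11_mem_link.mp h2)) (st11_mem_link.mp h1)
  have hnop4 : ∀ v : Fin n,
      ¬(v ∈ link E vi vk ∧ v ∈ link E vi vj ∧ v ∈ link E vj vl) ∧
      ¬(v ∈ link E vi vl ∧ v ∈ link E vi vj ∧ v ∈ link E vj vk) ∧
      ¬(v ∈ link E vi vj ∧ v ∈ link E vi vk ∧ v ∈ link E vk vl) ∧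
      ¬(v ∈ link E vi vl ∧ v ∈ link E vi vk ∧ v ∈ link E vj vk) ∧
      ¬(v ∈ link E vi vj ∧ v ∈ link E vi vl ∧ v ∈ link E vk vl) ∧
      ¬(v ∈ link E vi vk ∧ v ∈ link E vi vl ∧ v ∈ link E vj vl) ∧
      ¬(v ∈ link E vi vj ∧ v ∈ link E vj vk ∧ v ∈ link E vk vl) ∧
      ¬(v ∈ link E vj vl ∧ v ∈ link E vj vk ∧ v ∈ link E vi vk) ∧
      ¬(v ∈ link E vi vj ∧ v ∈ link E vj vl ∧ v ∈ link E vk vl) ∧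
      ¬(v ∈ link E vj vk ∧ v ∈ link E vj vl ∧ v ∈ link E vi vl) ∧
      ¬(v ∈ link E vi vk ∧ v ∈ link E vk vl ∧ v ∈ link E vj vl) ∧
      ¬(v ∈ link E vj vk ∧ v ∈ link E vk vl ∧ v ∈ link E vi vl) := by
    intro v
    refine ⟨?_, ?_, ?_, ?_, ?_, ?_, ?_, ?_, ?_, ?_, ?_, ?_⟩
    · rintro ⟨h1, h2, h3⟩
      exact st11_buildC5 hE hC5free v vi vk vl vj
        (st11_perm312 (st11_mem_link.mp h1)) eikl (st11_perm231 ejkl)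
        (st11_perm213 (st11_mem_link.mp h3)) (st11_perm231 (st11_mem_link.mp h2))
    · rintro ⟨h1, h2, h3⟩
      exact st11_buildC5 hE hC5free v vi vl vk vj
        (st11_perm312 (st11_mem_link.mp h1)) (st11_perm132 eikl) (st11_perm321 ejkl)
        (st11_perm213 (st11_mem_link.mp h3)) (st11_perm231 (st11_mem_link.mp h2))
    · rintro ⟨h1, h2, h3⟩
      exact st11_buildC5 hE hC5free v vi vj vl vk
        (st11_perm312 (st11_mem_link.mp h1)) eijl (st11_perm132 ejkl)
        (st11_perm213 (st11_mem_link.mp h3)) (st11_perm231 (st11_mem_link.mp h2))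
    · rintro ⟨h1, h2, h3⟩
      exact st11_buildC5 hE hC5free v vi vl vj vk
        (st11_perm312 (st11_mem_link.mp h1)) (st11_perm132 eijl) (st11_perm312 ejkl)
        (st11_mem_link.mp h3) (st11_perm231 (st11_mem_link.mp h2))
    · rintro ⟨h1, h2, h3⟩
      exact st11_buildC5 hE hC5free v vi vj vk vl
        (st11_perm312 (st11_mem_link.mp h1)) eijk ejkl
        (st11_mem_link.mp h3) (st11_perm231 (st11_mem_link.mp h2))
    · rintro ⟨h1, h2, h3⟩
      exact st11_buildC5 hE hC5free v vi vk vj vl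
        (st11_perm312 (st11_mem_link.mp h1)) (st11_perm132 eijk) (st11_perm213 ejkl)
        (st11_mem_link.mp h3) (st11_perm231 (st11_mem_link.mp h2))
    · rintro ⟨h1, h2, h3⟩
      exact st11_buildC5 hE hC5free v vj vi vl vk
        (st11_perm321 (st11_mem_link.mp h1)) (st11_perm213 eijl) (st11_perm132 eikl)
        (st11_perm213 (st11_mem_link.mp h3)) (st11_perm231 (st11_mem_link.mp h2))
    · rintro ⟨h1, h2, h3⟩
      exact st11_buildC5 hE hC5free v vj vl vi vk
        (st11_perm312 (st11_mem_link.mp h1)) (st11_perm231 eijl) (st11_perm312 eikl)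
        (st11_mem_link.mp h3) (st11_perm231 (st11_mem_link.mp h2))
    · rintro ⟨h1, h2, h3⟩
      exact st11_buildC5 hE hC5free v vj vi vk vl
        (st11_perm321 (st11_mem_link.mp h1)) (st11_perm213 eijk) eikl
        (st11_mem_link.mp h3) (st11_perm231 (st11_mem_link.mp h2))
    · rintro ⟨h1, h2, h3⟩
      exact st11_buildC5 hE hC5free v vj vk vi vl
        (st11_perm312 (st11_mem_link.mp h1)) (st11_perm231 eijk) (st11_perm213 eikl)
        (st11_mem_link.mp h3) (st11_perm231 (st11_mem_link.mp h2))
    · rintro ⟨h1, h2, h3⟩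
      exact st11_buildC5 hE hC5free v vk vi vj vl
        (st11_perm321 (st11_mem_link.mp h1)) (st11_perm312 eijk) eijl
        (st11_mem_link.mp h3) (st11_perm231 (st11_mem_link.mp h2))
    · rintro ⟨h1, h2, h3⟩
      exact st11_buildC5 hE hC5free v vk vj vi vl
        (st11_perm321 (st11_mem_link.mp h1)) (st11_perm321 eijk) (st11_perm213 eijl)
        (st11_mem_link.mp h3) (st11_perm231 (st11_mem_link.mp h2))
  set f : Fin n → ℕ := fun v =>
    (if v ∈ link E vi vj then 1 else 0) + (if v ∈ link E vi vk then 1 else 0) +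
    (if v ∈ link E vi vl then 1 else 0) + (if v ∈ link E vj vk then 1 else 0) +
    (if v ∈ link E vj vl then 1 else 0) + (if v ∈ link E vk vl then 1 else 0) with hf
  have hcap : ∀ v : Fin n, f v ≤ 3 := by
    intro v
    have h := st11_graph_le3 (decide (v ∈ link E vi vj)) (decide (v ∈ link E vi vk))
      (decide (v ∈ link E vi vl)) (decide (v ∈ link E vj vk)) (decide (v ∈ link E vj vl))
      (decide (v ∈ link E vk vl)) (by simpa using hnop4 v)
    simp only [st11_toNat_decide] at h
    simp only [hf]
    exact h
  have hsum : (∑ v : Fin n, f v) =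
      (link E vi vj).card + (link E vi vk).card + (link E vi vl).card +
      (link E vj vk).card + (link E vj vl).card + (link E vk vl).card := by
    simp only [hf, Finset.sum_add_distrib, st11_sum_ind]
  have hd12 : n ≤ 2 * (link E vi vj).card := hdeg vi vj ⟨vk, st11_mem_link.mpr eijk⟩
  have hd13 : n ≤ 2 * (link E vi vk).card :=
    hdeg vi vk ⟨vj, st11_mem_link.mpr (st11_perm132 eijk)⟩
  have hd14 : n ≤ 2 * (link E vi vl).card :=
    hdeg vi vl ⟨vj, st11_mem_link.mpr (st11_perm132 eijl)⟩
  have hd23 : n ≤ 2 * (link E vj vk).card :=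
    hdeg vj vk ⟨vi, st11_mem_link.mpr (st11_perm231 eijk)⟩
  have hd24 : n ≤ 2 * (link E vj vl).card :=
    hdeg vj vl ⟨vi, st11_mem_link.mpr (st11_perm231 eijl)⟩
  have hd34 : n ≤ 2 * (link E vk vl).card :=
    hdeg vk vl ⟨vi, st11_mem_link.mpr (st11_perm231 eikl)⟩
  have hw3 : ∀ w : Fin n, 3 ≤ f w := by
    intro w
    have h1 : (∑ v ∈ Finset.univ.erase w, f v) ≤ (Finset.univ.erase w).card * 3 := by
      simpa [smul_eq_mul] using
        Finset.sum_le_card_nsmul (Finset.univ.erase w) f 3 (fun x _ => hcap x)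
    have h2 : (Finset.univ.erase w).card = n - 1 := by
      rw [Finset.card_erase_of_mem (Finset.mem_univ w)]; simp
    have h3 : (∑ v ∈ Finset.univ.erase w, f v) + f w = ∑ v : Fin n, f v :=
      Finset.sum_erase_add _ _ (Finset.mem_univ w)
    have hpos : 0 < n := w.pos
    omega
  have hclass : ∀ w ∈ link E a vj,
      w ∈ Aset E vj vk vl ∪ Aset E vi vk vl ∪ Bset E vi vj vk vl ∪ Bset E vj vi vk vl := by
    intro w hw
    have hbad1 : ¬(w ∈ link E vi vj ∧ w ∈ link E vj vl ∧ w ∈ link E vi vl) := by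
      rintro ⟨h1, h2, h3⟩
      exact hdAk w hw (by
        simp only [Aset, Finset.mem_inter]
        exact ⟨⟨h1, h2⟩, by rw [st11_link_comm]; exact h3⟩)
    have hbad2 : ¬(w ∈ link E vi vk ∧ w ∈ link E vj vk ∧ w ∈ link E vk vl) := by
      rintro ⟨h1, h2, h3⟩
      exact hdBk w hw (by
        simp only [Bset, Finset.mem_inter]
        exact ⟨⟨by rw [st11_link_comm]; exact h1, by rw [st11_link_comm]; exact h2⟩, h3⟩)
    have hbad3 : ¬(w ∈ link E vi vj ∧ w ∈ link E vj vk ∧ w ∈ link E vi vk) := by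
      rintro ⟨h1, h2, h3⟩
      exact hdAl w hw (by
        simp only [Aset, Finset.mem_inter]
        exact ⟨⟨h1, h2⟩, by rw [st11_link_comm]; exact h3⟩)
    have hbad4 : ¬(w ∈ link E vi vl ∧ w ∈ link E vj vl ∧ w ∈ link E vk vl) := by
      rintro ⟨h1, h2, h3⟩
      exact hdBl w hw (by
        simp only [Bset, Finset.mem_inter]
        exact ⟨⟨by rw [st11_link_comm]; exact h1, by rw [st11_link_comm]; exact h2⟩,
          by rw [st11_link_comm]; exact h3⟩)
    have hcnt : 3 ≤ (decide (w ∈ link E vi vj)).toNat + (decide (w ∈ link E vi vk)).toNat +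
        (decide (w ∈ link E vi vl)).toNat + (decide (w ∈ link E vj vk)).toNat +
        (decide (w ∈ link E vj vl)).toNat + (decide (w ∈ link E vk vl)).toNat := by
      have := hw3 w
      simp only [hf] at this
      simpa [st11_toNat_decide] using this
    have hgood := st11_graph_classify (decide (w ∈ link E vi vj)) (decide (w ∈ link E vi vk))
      (decide (w ∈ link E vi vl)) (decide (w ∈ link E vj vk)) (decide (w ∈ link E vj vl))
      (decide (w ∈ link E vk vl)) (by simpa using hnop4 w) hcnt
      (by simpa using (⟨hbad1, hbad2, hbad3, hbad4⟩ :
        ¬(w ∈ link E vi vj ∧ w ∈ link E vj vl ∧ w ∈ link E vi vl) ∧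
        ¬(w ∈ link E vi vk ∧ w ∈ link E vj vk ∧ w ∈ link E vk vl) ∧
        ¬(w ∈ link E vi vj ∧ w ∈ link E vj vk ∧ w ∈ link E vi vk) ∧
        ¬(w ∈ link E vi vl ∧ w ∈ link E vj vl ∧ w ∈ link E vk vl)))
    simp only [decide_eq_true_eq] at hgood
    rcases hgood with ⟨h1, h2, h3⟩ | ⟨h1, h2, h3⟩ | ⟨h1, h2, h3⟩ | ⟨h1, h2, h3⟩
    · refine Finset.mem_union_left _ (Finset.mem_union_left _ (Finset.mem_union_left _ ?_))
      simp only [Aset, Finset.mem_inter]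
      exact ⟨⟨h1, h2⟩, by rw [st11_link_comm]; exact h3⟩
    · refine Finset.mem_union_left _ (Finset.mem_union_left _ (Finset.mem_union_right _ ?_))
      simp only [Aset, Finset.mem_inter]
      exact ⟨⟨h1, h2⟩, by rw [st11_link_comm]; exact h3⟩
    · refine Finset.mem_union_left _ (Finset.mem_union_right _ ?_)
      simp only [Bset, Finset.mem_inter]
      exact ⟨⟨h1, h2⟩, h3⟩
    · refine Finset.mem_union_right _ ?_
      simp only [Bset, Finset.mem_inter]
      exact ⟨⟨by rw [st11_link_comm]; exact h1, h2⟩, h3⟩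
  refine ⟨?_, ?_, ?_⟩
  · rw [Finset.disjoint_left]
    intro x hx hmem
    rcases Finset.mem_union.mp hmem with h | h
    · exact hdAk x hx h
    · exact hdBk x hx h
  · rw [Finset.disjoint_left]
    intro x hx hmem
    rcases Finset.mem_union.mp hmem with h | h
    · exact hdAl x hx h
    · exact hdBl x hx h
  · have hsubset : insert a (link E a vj) ⊆
        Aset E vj vk vl ∪ Aset E vi vk vl ∪ Bset E vi vj vk vl ∪ Bset E vj vi vk vl := by
      intro w hw
      rcases Finset.mem_insert.mp hw with rfl | hw'
      · exact Finset.mem_union_left _ (Finset.mem_union_right _ ha)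
      · exact hclass w hw'
    have hins : (insert a (link E a vj)).card = (link E a vj).card + 1 :=
      Finset.card_insert_of_notMem (st11_self_notMem_link hE a vj)
    have hsub2 := Finset.card_le_card hsubset
    have hu1 := Finset.card_union_le
      (Aset E vj vk vl ∪ Aset E vi vk vl ∪ Bset E vi vj vk vl) (Bset E vj vi vk vl)
    have hu2 := Finset.card_union_le (Aset E vj vk vl ∪ Aset E vi vk vl) (Bset E vi vj vk vl)
    have hu3 := Finset.card_union_le (Aset E vj vk vl) (Aset E vi vk vl)
    have hna : n ≤ 2 * (link E a vj).card :=
      hdeg a vj ⟨vi, st11_mem_link.mpr (st11_perm321 Eaij)⟩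
    omega
end

section
/- Let H be an n-vertex C5-free 3-graph with δ2^+(H) = n/2 containing a K4 on vi, vj, vk, vl with B_i ≠ ∅. Then for a vertex a, N(a, vj) = ∅ if and only if a ∈ A_j = N(vi,vk) ∩ N(vk,vl) ∩ N(vl,vi). -/
open Finset

/-! ### Auxiliary machinery -/

/-- Symmetric edge predicate. -/
def edg {n : ℕ} (E : Finset (Finset (Fin n))) (x y z : Fin n) : Prop :=
  ({x, y, z} : Finset (Fin n)) ∈ E

lemma edg_congr {n : ℕ} {E : Finset (Finset (Fin n))} {x y z x' y' z' : Fin n}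
    (h : edg E x y z)
    (hp : ∀ t : Fin n, (t = x' ∨ t = y' ∨ t = z') ↔ (t = x ∨ t = y ∨ t = z)) :
    edg E x' y' z' := by
  unfold edg at h ⊢
  have he : ({x', y', z'} : Finset (Fin n)) = {x, y, z} := by
    ext t
    simp only [Finset.mem_insert, Finset.mem_singleton]
    exact hp t
  rwa [he]


lemma p213 {n : ℕ} {E : Finset (Finset (Fin n))} {x y z : Fin n} (h : edg E x y z) :
    edg E y x z := edg_congr h (by intro t; tauto)

lemma p132 {n : ℕ} {E : Finset (Finset (Fin n))} {x y z : Fin n} (h : edg E x y z) :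
    edg E x z y := edg_congr h (by intro t; tauto)

lemma p231 {n : ℕ} {E : Finset (Finset (Fin n))} {x y z : Fin n} (h : edg E x y z) :
    edg E y z x := edg_congr h (by intro t; tauto)

lemma p312 {n : ℕ} {E : Finset (Finset (Fin n))} {x y z : Fin n} (h : edg E x y z) :
    edg E z x y := edg_congr h (by intro t; tauto)

lemma p321 {n : ℕ} {E : Finset (Finset (Fin n))} {x y z : Fin n} (h : edg E x y z) :
    edg E z y x := edg_congr h (by intro t; tauto)

lemma mem_link_iff {n : ℕ} {E : Finset (Finset (Fin n))} {u v w : Fin n} :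
    w ∈ link E u v ↔ edg E u v w := by
  simp [link, edg]

lemma edg_ne {n : ℕ} {E : Finset (Finset (Fin n))} (hE : isEdgeSet E) {x y z : Fin n}
    (h : edg E x y z) : x ≠ y ∧ x ≠ z ∧ y ≠ z := by
  have hc := hE _ h
  refine ⟨?_, ?_, ?_⟩
  · rintro rfl
    have he : ({x, x, z} : Finset (Fin n)) = {x, z} := by
      ext t; simp only [Finset.mem_insert, Finset.mem_singleton]; tauto
    rw [he] at hc
    have := Finset.card_insert_le x ({z} : Finset (Fin n))
    simp only [Finset.card_singleton] at this
    omega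
  · rintro rfl
    have he : ({x, y, x} : Finset (Fin n)) = {x, y} := by
      ext t; simp only [Finset.mem_insert, Finset.mem_singleton]; tauto
    rw [he] at hc
    have := Finset.card_insert_le x ({y} : Finset (Fin n))
    simp only [Finset.card_singleton] at this
    omega
  · rintro rfl
    have he : ({x, y, y} : Finset (Fin n)) = {x, y} := by
      ext t; simp only [Finset.mem_insert, Finset.mem_singleton]; tauto
    rw [he] at hc
    have := Finset.card_insert_le x ({y} : Finset (Fin n))
    simp only [Finset.card_singleton] at this
    omega

/-- A tight 5-cycle from five consecutive edges: contradiction with C5-freeness.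
All distinctness requirements follow from the edges themselves. -/
lemma cyc5 {n : ℕ} {E : Finset (Finset (Fin n))} (hE : isEdgeSet E) (hf : ¬ hasC5 E)
    {x1 x2 x3 x4 x5 : Fin n}
    (e1 : edg E x1 x2 x3) (e2 : edg E x2 x3 x4) (e3 : edg E x3 x4 x5)
    (e4 : edg E x4 x5 x1) (e5 : edg E x5 x1 x2) : False := by
  obtain ⟨d12, d13, d23⟩ := edg_ne hE e1
  obtain ⟨-, d24, d34⟩ := edg_ne hE e2
  obtain ⟨-, d35, d45⟩ := edg_ne hE e3
  obtain ⟨-, d41, d51⟩ := edg_ne hE e4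
  obtain ⟨-, d52, -⟩ := edg_ne hE e5
  exact hf ⟨x1, x2, x3, x4, x5, d12, d13, d41.symm, d51.symm, d23, d24, d52.symm,
    d34, d35, d45, e1, e2, e3, e4, e5⟩

/-- The "bridge" configuration: a vertex in the links of two opposite pairs of a K4
and in a mixed link gives a C5. -/
lemma bridge {n : ℕ} {E : Finset (Finset (Fin n))} (hE : isEdgeSet E) (hf : ¬ hasC5 E)
    (p1 p2 q1 q2 v : Fin n)
    (k1 : edg E p1 p2 q1) (k2 : edg E p2 q1 q2)
    (h1 : edg E p1 p2 v) (h2 : edg E q1 q2 v) (h3 : edg E q2 p1 v) : False := by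
  have c1 : edg E v p1 p2 := p312 h1
  have c5 : edg E q2 v p1 := p132 h3
  exact cyc5 hE hf c1 k1 k2 h2 c5

/-- Two big halves that jointly miss a vertex must intersect. -/
lemma halves {n : ℕ} (P Q : Finset (Fin n)) (hP : n ≤ 2 * P.card) (hQ : n ≤ 2 * Q.card)
    (x : Fin n) (hxP : x ∉ P) (hxQ : x ∉ Q) : ∃ z, z ∈ P ∧ z ∈ Q := by
  have hn : 0 < n := x.pos
  have hsub : P ∪ Q ⊆ Finset.univ.erase x := by
    intro t ht
    rcases Finset.mem_union.1 ht with h | h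
    · exact Finset.mem_erase.2 ⟨fun he => hxP (he ▸ h), Finset.mem_univ t⟩
    · exact Finset.mem_erase.2 ⟨fun he => hxQ (he ▸ h), Finset.mem_univ t⟩
  have hcard : (P ∪ Q).card ≤ n - 1 := by
    have := Finset.card_le_card hsub
    rwa [Finset.card_erase_of_mem (Finset.mem_univ x), Finset.card_univ,
      Fintype.card_fin] at this
  have hie : (P ∪ Q).card + (P ∩ Q).card = P.card + Q.card :=
    Finset.card_union_add_card_inter P Q
  have hpos : 0 < (P ∩ Q).card := by omega
  obtain ⟨z, hz⟩ := Finset.card_pos.1 hpos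
  exact ⟨z, (Finset.mem_inter.1 hz).1, (Finset.mem_inter.1 hz).2⟩

set_option maxHeartbeats 1000000 in
/-- The key partition lemma: for a K4 in a C5-free graph with all nonempty links of
size at least `n/2`, every vertex is in exactly one link of each opposite pair. -/
lemma partitionK4 {n : ℕ} {E : Finset (Finset (Fin n))} (hE : isEdgeSet E) (hf : ¬ hasC5 E)
    (hdeg : ∀ u v : Fin n, (link E u v).Nonempty → n ≤ 2 * (link E u v).card)
    (vi vj vk vl : Fin n)
    (K1 : edg E vi vj vk) (K2 : edg E vi vj vl) (K3 : edg E vi vk vl) (K4e : edg E vj vk vl) :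
    ∀ v : Fin n,
      (v ∈ link E vi vj ↔ v ∉ link E vk vl) ∧
      (v ∈ link E vi vk ↔ v ∉ link E vj vl) ∧
      (v ∈ link E vi vl ↔ v ∉ link E vj vk) := by
  classical
  have eKLI : edg E vk vl vi := p231 K3
  have eJLI : edg E vj vl vi := p231 K2
  have eILK : edg E vi vl vk := p132 K3
  have eJKI : edg E vj vk vi := p231 K1
  have B1 : n ≤ 2 * (link E vi vj).card := hdeg _ _ ⟨vk, mem_link_iff.2 K1⟩
  have B2 : n ≤ 2 * (link E vk vl).card := hdeg _ _ ⟨vi, mem_link_iff.2 eKLI⟩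
  have B3 : n ≤ 2 * (link E vi vk).card := hdeg _ _ ⟨vl, mem_link_iff.2 K3⟩
  have B4 : n ≤ 2 * (link E vj vl).card := hdeg _ _ ⟨vi, mem_link_iff.2 eJLI⟩
  have B5 : n ≤ 2 * (link E vi vl).card := hdeg _ _ ⟨vk, mem_link_iff.2 eILK⟩
  have B6 : n ≤ 2 * (link E vj vk).card := hdeg _ _ ⟨vi, mem_link_iff.2 eJKI⟩
  have dub1 : ∀ v, v ∈ link E vi vj → v ∈ link E vk vl →
      v ∉ link E vi vk ∧ v ∉ link E vj vl ∧ v ∉ link E vi vl ∧ v ∉ link E vj vk := by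
    intro v h1 h2
    have m1 : edg E vi vj v := mem_link_iff.1 h1
    have m2 : edg E vk vl v := mem_link_iff.1 h2
    refine ⟨fun h => ?_, fun h => ?_, fun h => ?_, fun h => ?_⟩
    · have m3 : edg E vi vk v := mem_link_iff.1 h
      have t1 : edg E vj vl vk := p132 K4e
      have t2 : edg E vl vk v := p213 m2
      have t3 : edg E vk vi v := p213 m3
      exact bridge hE hf vi vj vl vk v K2 t1 m1 t2 t3
    · have m3 : edg E vj vl v := mem_link_iff.1 h
      have t1 : edg E vj vi vk := p213 K1
      have t2 : edg E vj vi v := p213 m1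
      have t3 : edg E vl vj v := p213 m3
      exact bridge hE hf vj vi vk vl v t1 K3 t2 m2 t3
    · have m3 : edg E vi vl v := mem_link_iff.1 h
      have t3 : edg E vl vi v := p213 m3
      exact bridge hE hf vi vj vk vl v K1 K4e m1 m2 t3
    · have m3 : edg E vj vk v := mem_link_iff.1 h
      have t1 : edg E vj vi vl := p213 K2
      have t2 : edg E vi vl vk := eILK
      have t3 : edg E vj vi v := p213 m1
      have t4 : edg E vl vk v := p213 m2
      have t5 : edg E vk vj v := p213 m3
      exact bridge hE hf vj vi vl vk v t1 t2 t3 t4 t5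
  have dub2 : ∀ v, v ∈ link E vi vk → v ∈ link E vj vl →
      v ∉ link E vi vj ∧ v ∉ link E vk vl ∧ v ∉ link E vi vl ∧ v ∉ link E vj vk := by
    intro v h1 h2
    have m1 : edg E vi vk v := mem_link_iff.1 h1
    have m2 : edg E vj vl v := mem_link_iff.1 h2
    refine ⟨fun h => ?_, fun h => ?_, fun h => ?_, fun h => ?_⟩
    · have m3 : edg E vi vj v := mem_link_iff.1 h
      have t1 : edg E vk vl vj := p231 K4e
      have t2 : edg E vl vj v := p213 m2
      have t3 : edg E vj vi v := p213 m3
      exact bridge hE hf vi vk vl vj v K3 t1 m1 t2 t3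
    · have m3 : edg E vk vl v := mem_link_iff.1 h
      have t1 : edg E vk vi vj := p312 K1
      have t2 : edg E vk vi v := p213 m1
      have t3 : edg E vl vk v := p213 m3
      exact bridge hE hf vk vi vj vl v t1 K2 t2 m2 t3
    · have m3 : edg E vi vl v := mem_link_iff.1 h
      have t1 : edg E vi vk vj := p132 K1
      have t2 : edg E vk vj vl := p213 K4e
      have t3 : edg E vl vi v := p213 m3
      exact bridge hE hf vi vk vj vl v t1 t2 m1 m2 t3
    · have m3 : edg E vj vk v := mem_link_iff.1 h
      have t1 : edg E vk vi vl := p213 K3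
      have t2 : edg E vi vl vj := p132 K2
      have t3 : edg E vk vi v := p213 m1
      have t4 : edg E vl vj v := p213 m2
      have t5 : edg E vj vk v := m3
      exact bridge hE hf vk vi vl vj v t1 t2 t3 t4 t5
  have dub3 : ∀ v, v ∈ link E vi vl → v ∈ link E vj vk →
      v ∉ link E vi vj ∧ v ∉ link E vk vl ∧ v ∉ link E vi vk ∧ v ∉ link E vj vl := by
    intro v h1 h2
    have m1 : edg E vi vl v := mem_link_iff.1 h1
    have m2 : edg E vj vk v := mem_link_iff.1 h2
    refine ⟨fun h => ?_, fun h => ?_, fun h => ?_, fun h => ?_⟩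
    · have m3 : edg E vi vj v := mem_link_iff.1 h
      have t1 : edg E vl vk vj := p321 K4e
      have t2 : edg E vk vj v := p213 m2
      have t3 : edg E vj vi v := p213 m3
      exact bridge hE hf vi vl vk vj v eILK t1 m1 t2 t3
    · have m3 : edg E vk vl v := mem_link_iff.1 h
      have t1 : edg E vl vi vj := p312 K2
      have t2 : edg E vl vi v := p213 m1
      exact bridge hE hf vl vi vj vk v t1 K1 t2 m2 m3
    · have m3 : edg E vi vk v := mem_link_iff.1 h
      have t1 : edg E vi vl vj := p132 K2
      have t2 : edg E vl vj vk := p312 K4e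
      have t3 : edg E vk vi v := p213 m3
      exact bridge hE hf vi vl vj vk v t1 t2 m1 m2 t3
    · have m3 : edg E vj vl v := mem_link_iff.1 h
      have t1 : edg E vl vi vk := p312 K3
      have t2 : edg E vi vk vj := p132 K1
      have t3 : edg E vl vi v := p213 m1
      have t4 : edg E vk vj v := p213 m2
      exact bridge hE hf vl vi vk vj v t1 t2 t3 t4 m3
  set d : Fin n → ℕ := fun v =>
    (if v ∈ link E vi vj then 1 else 0) + (if v ∈ link E vk vl then 1 else 0) +
    ((if v ∈ link E vi vk then 1 else 0) + (if v ∈ link E vj vl then 1 else 0)) +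
    ((if v ∈ link E vi vl then 1 else 0) + (if v ∈ link E vj vk then 1 else 0)) with hd
  have cle : ∀ (v : Fin n) (A B : Finset (Fin n)), ¬(v ∈ A ∧ v ∈ B) →
      ((if v ∈ A then 1 else 0) + (if v ∈ B then 1 else 0)) ≤ 1 := by
    intro v A B hAB
    by_cases hA : v ∈ A
    · rw [if_pos hA, if_neg (fun hB => hAB ⟨hA, hB⟩)]
    · rw [if_neg hA]
      split_ifs <;> omega
  have upper : ∀ v, d v ≤ 3 := by
    intro v
    by_cases b1 : v ∈ link E vi vj ∧ v ∈ link E vk vl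
    · obtain ⟨n3, n4, n5, n6⟩ := dub1 v b1.1 b1.2
      simp only [hd, if_pos b1.1, if_pos b1.2, if_neg n3, if_neg n4, if_neg n5, if_neg n6]
      omega
    · by_cases b2 : v ∈ link E vi vk ∧ v ∈ link E vj vl
      · obtain ⟨n1, n2, n5, n6⟩ := dub2 v b2.1 b2.2
        simp only [hd, if_pos b2.1, if_pos b2.2, if_neg n1, if_neg n2, if_neg n5, if_neg n6]
        omega
      · by_cases b3 : v ∈ link E vi vl ∧ v ∈ link E vj vk
        · obtain ⟨n1, n2, n3, n4⟩ := dub3 v b3.1 b3.2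
          simp only [hd, if_pos b3.1, if_pos b3.2, if_neg n1, if_neg n2, if_neg n3, if_neg n4]
          omega
        · have c1 := cle v _ _ b1
          have c2 := cle v _ _ b2
          have c3 := cle v _ _ b3
          simp only [hd]
          omega
  have card_eq : ∀ L : Finset (Fin n), (∑ v : Fin n, if v ∈ L then 1 else 0) = L.card := by
    intro L
    rw [← Finset.card_filter]
    congr 1
    ext t
    simp
  have hsum : (∑ v : Fin n, d v) =
      (link E vi vj).card + (link E vk vl).card +
      ((link E vi vk).card + (link E vj vl).card) +
      ((link E vi vl).card + (link E vj vk).card) := by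
    simp only [hd]
    rw [Finset.sum_add_distrib, Finset.sum_add_distrib, Finset.sum_add_distrib,
      Finset.sum_add_distrib, Finset.sum_add_distrib,
      card_eq, card_eq, card_eq, card_eq, card_eq, card_eq]
  have lower : 3 * n ≤ ∑ v : Fin n, d v := by
    rw [hsum]; omega
  have sum3 : (∑ _v : Fin n, (3 : ℕ)) = 3 * n := by
    rw [Finset.sum_const, Finset.card_univ, Fintype.card_fin, smul_eq_mul]
    ring
  have deq : ∀ v, d v = 3 := by
    by_contra hc
    push_neg at hc
    obtain ⟨v0, hv0⟩ := hc
    have hlt : d v0 < 3 := lt_of_le_of_ne (upper v0) hv0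
    have hslt : (∑ v : Fin n, d v) < ∑ _v : Fin n, (3 : ℕ) :=
      Finset.sum_lt_sum (fun i _ => upper i) ⟨v0, Finset.mem_univ _, hlt⟩
    rw [sum3] at hslt
    omega
  intro v
  have h3 := deq v
  by_cases b1 : v ∈ link E vi vj ∧ v ∈ link E vk vl
  · exfalso
    obtain ⟨n3, n4, n5, n6⟩ := dub1 v b1.1 b1.2
    simp only [hd, if_pos b1.1, if_pos b1.2, if_neg n3, if_neg n4, if_neg n5, if_neg n6] at h3
    omega
  · by_cases b2 : v ∈ link E vi vk ∧ v ∈ link E vj vl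
    · exfalso
      obtain ⟨n1, n2, n5, n6⟩ := dub2 v b2.1 b2.2
      simp only [hd, if_pos b2.1, if_pos b2.2, if_neg n1, if_neg n2, if_neg n5, if_neg n6] at h3
      omega
    · by_cases b3 : v ∈ link E vi vl ∧ v ∈ link E vj vk
      · exfalso
        obtain ⟨n1, n2, n3, n4⟩ := dub3 v b3.1 b3.2
        simp only [hd, if_pos b3.1, if_pos b3.2, if_neg n1, if_neg n2, if_neg n3, if_neg n4] at h3
        omega
      · have c1 := cle v _ _ b1
        have c2 := cle v _ _ b2
        have c3 := cle v _ _ b3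
        simp only [hd] at h3
        have e1 : (if v ∈ link E vi vj then 1 else 0) + (if v ∈ link E vk vl then 1 else 0)
            = 1 := by omega
        have e2 : (if v ∈ link E vi vk then 1 else 0) + (if v ∈ link E vj vl then 1 else 0)
            = 1 := by omega
        have e3 : (if v ∈ link E vi vl then 1 else 0) + (if v ∈ link E vj vk then 1 else 0)
            = 1 := by omega
        refine ⟨?_, ?_, ?_⟩
        · by_cases h1 : v ∈ link E vi vj <;> by_cases h2 : v ∈ link E vk vl <;>
            simp only [if_pos, if_neg, h1, h2, if_true, if_false] at e1 <;>
            simp [h1, h2] <;> omega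
        · by_cases h1 : v ∈ link E vi vk <;> by_cases h2 : v ∈ link E vj vl <;>
            simp only [if_pos, if_neg, h1, h2, if_true, if_false] at e2 <;>
            simp [h1, h2] <;> omega
        · by_cases h1 : v ∈ link E vi vl <;> by_cases h2 : v ∈ link E vj vk <;>
            simp only [if_pos, if_neg, h1, h2, if_true, if_false] at e3 <;>
            simp [h1, h2] <;> omega

set_option maxHeartbeats 1000000 in
/-- Fact 7: if `B_i ≠ ∅`, then `N(a, vj) = ∅` iff `a ∈ A_j`. -/
theorem stmt_14 (n : ℕ) (E : Finset (Finset (Fin n))) (hE : isEdgeSet E)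
    (hC5free : ¬ hasC5 E)
    (hdeg : ∀ u v : Fin n, (link E u v).Nonempty → n ≤ 2 * (link E u v).card)
    (hexact : ∃ u v : Fin n, (link E u v).Nonempty ∧ 2 * (link E u v).card = n)
    (vi vj vk vl : Fin n) (hK4 : isK4 E vi vj vk vl)
    (hBi : (Bset E vi vj vk vl).Nonempty) :
    ∀ a : Fin n, link E a vj = ∅ ↔ a ∈ Aset E vi vk vl := by
  classical
  obtain ⟨hij, hik, hil, hjk, hjl, hkl, k1, k2, k3, k4⟩ := hK4
  have K1 : edg E vi vj vk := k1
  have K2 : edg E vi vj vl := k2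
  have K3 : edg E vi vk vl := k3
  have K4e : edg E vj vk vl := k4
  have part := partitionK4 hE hC5free hdeg vi vj vk vl K1 K2 K3 K4e
  intro a
  constructor
  · -- If N(a,vj) = ∅ then a ∈ A_j
    intro h0
    have hnot : ∀ t : Fin n, edg E a vj t → False := by
      intro t ht
      have : t ∈ link E a vj := mem_link_iff.2 ht
      rw [h0] at this
      exact absurd this (Finset.notMem_empty t)
    have nij : a ∉ link E vi vj := by
      intro h
      have m : edg E vi vj a := mem_link_iff.1 h
      exact hnot vi (p321 m)
    have njl : a ∉ link E vj vl := by
      intro h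
      have m : edg E vj vl a := mem_link_iff.1 h
      exact hnot vl (p312 m)
    have njk : a ∉ link E vj vk := by
      intro h
      have m : edg E vj vk a := mem_link_iff.1 h
      exact hnot vk (p312 m)
    have akl : a ∈ link E vk vl := by by_contra h2; exact nij ((part a).1.mpr h2)
    have aik : a ∈ link E vi vk := (part a).2.1.mpr njl
    have ail : a ∈ link E vi vl := (part a).2.2.mpr njk
    refine Finset.mem_inter.2 ⟨Finset.mem_inter.2 ⟨aik, akl⟩, ?_⟩
    have m : edg E vi vl a := mem_link_iff.1 ail
    have m' : edg E vl vi a := p213 m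
    exact mem_link_iff.2 m'
  · -- If a ∈ A_j then N(a,vj) = ∅
    intro hA
    obtain ⟨hA12, hAvl⟩ := Finset.mem_inter.1 hA
    obtain ⟨hAik, hAkl⟩ := Finset.mem_inter.1 hA12
    have Aik : edg E vi vk a := mem_link_iff.1 hAik
    have Akl : edg E vk vl a := mem_link_iff.1 hAkl
    have Ali : edg E vi vl a := p213 (mem_link_iff.1 hAvl)
    by_cases haj : a = vj
    · subst haj
      rw [Finset.eq_empty_iff_forall_notMem]
      intro t ht
      exact (edg_ne hE (mem_link_iff.1 ht)).1 rfl
    · rw [← Finset.not_nonempty_iff_eq_empty]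
      intro hS
      -- STEP W : get w ∈ N(a,vj) ∩ N(a,vi)
      have hPa : n ≤ 2 * (link E a vj).card := hdeg a vj hS
      have eAIK : edg E a vi vk := p312 Aik
      have hQa : n ≤ 2 * (link E a vi).card := hdeg a vi ⟨vk, mem_link_iff.2 eAIK⟩
      have haP : a ∉ link E a vj := fun h => (edg_ne hE (mem_link_iff.1 h)).2.1 rfl
      have haQ : a ∉ link E a vi := fun h => (edg_ne hE (mem_link_iff.1 h)).2.1 rfl
      obtain ⟨w, hwP, hwQ⟩ := halves _ _ hPa hQa a haP haQ
      have Wj : edg E a vj w := mem_link_iff.1 hwP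
      have Wi : edg E a vi w := mem_link_iff.1 hwQ
      have cWj : edg E vj w a := p231 Wj
      have cWi : edg E w a vi := p312 Wi
      -- w has the B_i pattern
      have wil : w ∈ link E vi vl := by
        by_contra h
        have wjk : w ∈ link E vj vk := by by_contra h6; exact h ((part w).2.2.mpr h6)
        have c1 : edg E vi vk vj := p132 K1
        have c2 : edg E vk vj w := p213 (mem_link_iff.1 wjk)
        have c5 : edg E a vi vk := eAIK
        exact cyc5 hE hC5free c1 c2 cWj cWi c5
      have wik : w ∈ link E vi vk := by
        by_contra h
        have wjl : w ∈ link E vj vl := by by_contra h6; exact h ((part w).2.1.mpr h6)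
        have c1 : edg E vi vl vj := p132 K2
        have c2 : edg E vl vj w := p213 (mem_link_iff.1 wjl)
        have c5 : edg E a vi vl := p312 Ali
        exact cyc5 hE hC5free c1 c2 cWj cWi c5
      have wij : w ∈ link E vi vj := by
        by_contra h
        have wkl : w ∈ link E vk vl := by by_contra h6; exact h ((part w).1.mpr h6)
        have c1 : edg E vi a vk := p132 Aik
        have c2 : edg E a vk vl := p312 Akl
        have c3 : edg E vk vl w := mem_link_iff.1 wkl
        have c4 : edg E vl w vi := p231 (mem_link_iff.1 wil)
        have c5 : edg E w vi a := p321 Wi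
        exact cyc5 hE hC5free c1 c2 c3 c4 c5
      have Wij : edg E vi vj w := mem_link_iff.1 wij
      have Wik : edg E vi vk w := mem_link_iff.1 wik
      have Wil : edg E vi vl w := mem_link_iff.1 wil
      -- F1 : w ∉ N(a, vk)
      have F1 : w ∉ link E a vk := by
        intro h
        have c1 : edg E w a vk := p312 (mem_link_iff.1 h)
        have c2 : edg E a vk vi := p321 Aik
        have c3 : edg E vk vi vj := p312 K1
        have c4 : edg E vi vj w := Wij
        have c5 : edg E vj w a := cWj
        exact cyc5 hE hC5free c1 c2 c3 c4 c5
      -- STEP Y : get y ∈ N(a,vj) ∩ N(a,vk)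
      have eAKI : edg E a vk vi := p321 Aik
      have hQk : n ≤ 2 * (link E a vk).card := hdeg a vk ⟨vi, mem_link_iff.2 eAKI⟩
      have haQk : a ∉ link E a vk := fun h => (edg_ne hE (mem_link_iff.1 h)).2.1 rfl
      obtain ⟨y, hyP, hyQ⟩ := halves _ _ hPa hQk a haP haQk
      have Yj : edg E a vj y := mem_link_iff.1 hyP
      have Yk : edg E a vk y := mem_link_iff.1 hyQ
      have cYj : edg E vj y a := p231 Yj
      have cYk : edg E y a vk := p312 Yk
      -- y has the B_k pattern
      have ykl : y ∈ link E vk vl := by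
        by_contra h
        have yij : y ∈ link E vi vj := (part y).1.mpr h
        have c2 : edg E a vk vi := eAKI
        have c3 : edg E vk vi vj := p312 K1
        have c4 : edg E vi vj y := mem_link_iff.1 yij
        exact cyc5 hE hC5free cYk c2 c3 c4 cYj
      have yik : y ∈ link E vi vk := by
        by_contra h
        have yjl : y ∈ link E vj vl := by by_contra h6; exact h ((part y).2.1.mpr h6)
        have c2 : edg E a vk vl := p312 Akl
        have c3 : edg E vk vl vj := p231 K4e
        have c4 : edg E vl vj y := p213 (mem_link_iff.1 yjl)
        exact cyc5 hE hC5free cYk c2 c3 c4 cYj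
      have Ykl : edg E vk vl y := mem_link_iff.1 ykl
      have yjk : y ∈ link E vj vk := by
        by_contra h
        have yil : y ∈ link E vi vl := (part y).2.2.mpr h
        have c1 : edg E y vk a := p321 Yk
        have c2 : edg E vk a vi := p231 Aik
        have c3 : edg E a vi vl := p312 Ali
        have c4 : edg E vi vl y := mem_link_iff.1 yil
        have c5 : edg E vl y vk := p231 Ykl
        exact cyc5 hE hC5free c1 c2 c3 c4 c5
      have Yik : edg E vi vk y := mem_link_iff.1 yik
      have Yjk : edg E vj vk y := mem_link_iff.1 yjk
      -- Ca : y ∉ N(a, vl)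
      have Ca : y ∉ link E a vl := by
        intro h
        have c1 : edg E a y vk := p132 Yk
        have c2 : edg E y vk vi := p321 Yik
        have c3 : edg E vk vi vl := p213 K3
        have c4 : edg E vi vl a := Ali
        have c5 : edg E vl a y := p213 (mem_link_iff.1 h)
        exact cyc5 hE hC5free c1 c2 c3 c4 c5
      -- STEP Z : get z ∈ N(w,vj) ∩ N(vl,y)
      have eWJI : edg E w vj vi := p321 Wij
      have hPw : n ≤ 2 * (link E w vj).card := hdeg w vj ⟨vi, mem_link_iff.2 eWJI⟩
      have eLYK : edg E vl y vk := p231 Ykl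
      have hQy : n ≤ 2 * (link E vl y).card := hdeg vl y ⟨vk, mem_link_iff.2 eLYK⟩
      have hjPw : vj ∉ link E w vj := fun h => (edg_ne hE (mem_link_iff.1 h)).2.2 rfl
      have hjQy : vj ∉ link E vl y := by
        intro h
        have m : edg E vj vl y := p312 (mem_link_iff.1 h)
        exact ((part y).2.1.1 yik) (mem_link_iff.2 m)
      obtain ⟨z, hzP, hzQ⟩ := halves _ _ hPw hQy vj hjPw hjQy
      have Zw : edg E w vj z := mem_link_iff.1 hzP
      have Zy : edg E vl y z := mem_link_iff.1 hzQ
      have cZw : edg E z vj w := p321 Zw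
      have cZy : edg E z vl y := p312 Zy
      -- final case analysis on the pattern of z
      by_cases z3 : z ∈ link E vi vk
      · by_cases z5 : z ∈ link E vi vl
        · -- Z1 : cycle (z, vl, y, vk, vi)
          have c2 : edg E vl y vk := eLYK
          have c3 : edg E y vk vi := p321 Yik
          have c4 : edg E vk vi z := p213 (mem_link_iff.1 z3)
          have c5 : edg E vi z vl := p132 (mem_link_iff.1 z5)
          exact cyc5 hE hC5free cZy c2 c3 c4 c5
        · have z6 : z ∈ link E vj vk := by by_contra h6; exact z5 ((part z).2.2.mpr h6)
          -- Z2 : cycle (z, vj, w, vi, vk)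
          have c2 : edg E vj w vi := p231 Wij
          have c3 : edg E w vi vk := p312 Wik
          have c4 : edg E vi vk z := mem_link_iff.1 z3
          have c5 : edg E vk z vj := p231 (mem_link_iff.1 z6)
          exact cyc5 hE hC5free cZw c2 c3 c4 c5
      · have z4 : z ∈ link E vj vl := by by_contra h6; exact z3 ((part z).2.1.mpr h6)
        by_cases z5 : z ∈ link E vi vl
        · -- Z3 : cycle (z, vj, w, vi, vl)
          have c2 : edg E vj w vi := p231 Wij
          have c3 : edg E w vi vl := p312 Wil
          have c4 : edg E vi vl z := mem_link_iff.1 z5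
          have c5 : edg E vl z vj := p231 (mem_link_iff.1 z4)
          exact cyc5 hE hC5free cZw c2 c3 c4 c5
        · have z6 : z ∈ link E vj vk := by by_contra h6; exact z5 ((part z).2.2.mpr h6)
          -- Z4 : cycle (z, vl, y, vk, vj)
          have c2 : edg E vl y vk := eLYK
          have c3 : edg E y vk vj := p321 Yjk
          have c4 : edg E vk vj z := p213 (mem_link_iff.1 z6)
          have c5 : edg E vj z vl := p132 (mem_link_iff.1 z4)
          exact cyc5 hE hC5free cZy c2 c3 c4 c5
end
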